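/- Let X ∈ D_perf(R), let x ∈ R, let Y ∈ D(R), and let f : X → Y be a morphism in D(R). Suppose that for every i ∈ ℤ and every α ∈ H_i(Y) there exists n ∈ ℕ with x^n α = 0. Then there exists l ∈ ℕ such that x^l f = 0 in Hom_{D(R)}(X, Y). -/

import Mathlib

/-!
A bounded complex `P` of projectives is K-projective, so `f` is the image in `D(R)` of a chain
map `g : P ⟶ Y`, and it suffices to show that some `x ^ k • g` is null-homotopic. The homotopy is
built downwards from the top degree of `P`. In degree `n` the obstruction is a map from `P n` to
the cycles of `Y` in degree `n`; since `P n` is finitely generated and the homology of `Y` is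
`x`-power torsion, a single power `x ^ k'` pushes its image into the boundaries, and then
projectivity of `P n` lifts it through the differential. Each step multiplies by a new power of
`x`; boundedness of `P` makes the number of steps finite.
-/

open CategoryTheory CategoryTheory.Limits

universe w w' u

/-- The `S`-module structure on morphism groups `Hom_{D(S)}(Q M, Q N)` of the derived
category of a commutative ring `S`, where `s • f = f ≫ Q(s • 𝟙 N)`. -/
noncomputable instance derivedHomModule (S : Type u) [CommRing S]
    [HasDerivedCategory.{w} (ModuleCat.{u} S)]
    (M N : CochainComplex (ModuleCat.{u} S) ℤ) :
    Module S (DerivedCategory.Q.obj M ⟶ DerivedCategory.Q.obj N) where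
  smul s f := f ≫ DerivedCategory.Q.map (s • 𝟙 N)
  one_smul f := by
    show f ≫ DerivedCategory.Q.map ((1 : S) • 𝟙 N) = f
    simp
  mul_smul s t f := by
    show f ≫ DerivedCategory.Q.map ((s * t) • 𝟙 N) =
      (f ≫ DerivedCategory.Q.map (t • 𝟙 N)) ≫ DerivedCategory.Q.map (s • 𝟙 N)
    rw [Category.assoc, ← DerivedCategory.Q.map_comp]
    congr 2
    simp [Linear.smul_comp, Linear.comp_smul, smul_smul, mul_comm]
  smul_zero s := by
    show (0 : DerivedCategory.Q.obj M ⟶ DerivedCategory.Q.obj N) ≫ _ = 0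
    simp
  smul_add s f g := by
    show (f + g) ≫ _ = f ≫ _ + g ≫ _
    simp
  add_smul s t f := by
    show f ≫ DerivedCategory.Q.map ((s + t) • 𝟙 N) = f ≫ _ + f ≫ _
    rw [add_smul, DerivedCategory.Q.map_add, Preadditive.comp_add]
  zero_smul f := by
    show f ≫ DerivedCategory.Q.map ((0 : S) • 𝟙 N) = 0
    simp

universe v

theorem Submodule.exists_pow_smul_mem_of_finite {R M : Type*} [CommSemiring R] [AddCommMonoid M]
    [Module R M] [Module.Finite R M] (L : Submodule R M) (x : R)
    (h : ∀ m : M, ∃ n : ℕ, x ^ n • m ∈ L) : ∃ n : ℕ, ∀ m : M, x ^ n • m ∈ L := by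
  obtain ⟨s, hs⟩ := Module.Finite.fg_top (R := R) (M := M)
  choose n hn using h
  refine ⟨s.sup n, fun m => ?_⟩
  have hspan : Submodule.span R (s : Set M) ≤ L.comap (x ^ s.sup n • LinearMap.id) :=
    Submodule.span_le.2 fun q hq => by
      rw [SetLike.mem_coe, Submodule.mem_comap, LinearMap.smul_apply, LinearMap.id_apply,
        ← Nat.sub_add_cancel (Finset.le_sup (f := n) hq), pow_add, mul_smul]
      exact L.smul_mem _ (hn q)
  exact hspan (hs ▸ Submodule.mem_top (x := m))

lemma ModuleCat.exists_pow_smul_eq_zero_of_iso {R : Type u} [Ring R] {M N : ModuleCat.{v} R}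
    (e : M ≅ N) {x : R} (hM : ∀ α : M, ∃ n : ℕ, x ^ n • α = 0) (β : N) :
    ∃ n : ℕ, x ^ n • β = 0 := by
  obtain ⟨n, hn⟩ := hM (e.inv β)
  exact ⟨n, by simpa using congr(e.hom $hn)⟩

namespace CategoryTheory.ShortComplex

lemma exists_pow_smul_mem_range_f {R : Type u} [Ring R] (S : ShortComplex (ModuleCat.{v} R))
    {x : R} (hS : ∀ α : S.homology, ∃ n : ℕ, x ^ n • α = 0)
    {z : S.X₂} (hz : S.g z = 0) : ∃ n : ℕ, x ^ n • z ∈ LinearMap.range S.f.hom := by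
  let ζ : LinearMap.ker S.g.hom := ⟨z, hz⟩
  obtain ⟨n, hn⟩ := ModuleCat.exists_pow_smul_eq_zero_of_iso S.moduleCatHomologyIso hS
    (Submodule.Quotient.mk ζ : S.moduleCatLeftHomologyData.H)
  have hn' : (Submodule.Quotient.mk (x ^ n • ζ) :
      LinearMap.ker S.g.hom ⧸ LinearMap.range S.moduleCatToCycles) = 0 := hn
  obtain ⟨y, hy⟩ := (Submodule.Quotient.mk_eq_zero _).1 hn'
  exact ⟨n, y, congr(Subtype.val $hy)⟩

lemma exists_comp_f_eq_pow_smul {R : Type u} [CommRing R] (S : ShortComplex (ModuleCat.{v} R))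
    {x : R} (hS : ∀ α : S.homology, ∃ n : ℕ, x ^ n • α = 0)
    {M : ModuleCat.{v} R} [Module.Finite R M] [Module.Projective R M]
    (φ : M ⟶ S.X₂) (hφ : φ ≫ S.g = 0) :
    ∃ (n : ℕ) (c : M ⟶ S.X₁), c ≫ S.f = x ^ n • φ := by
  obtain ⟨n, hn⟩ := ((LinearMap.range S.f.hom).comap φ.hom).exists_pow_smul_mem_of_finite x
    fun m => by
      obtain ⟨k, hk⟩ := S.exists_pow_smul_mem_range_f hS congr($hφ m)
      exact ⟨k, by rwa [Submodule.mem_comap, map_smul]⟩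
  obtain ⟨c, hc⟩ := Module.projective_lifting_property S.f.hom.rangeRestrict
    ((x ^ n • φ.hom).codRestrict _ fun m => by simpa using hn m) S.f.hom.surjective_rangeRestrict
  exact ⟨n, ModuleCat.ofHom c, by ext m; simpa using congr(Subtype.val ($hc m))⟩

end CategoryTheory.ShortComplex

namespace CochainComplex.HomComplex

variable {C : Type*} [Category C] [Preadditive C] {K L : CochainComplex C ℤ}

lemma δ_neg_one_v (z : Cochain K L (-1)) (p q r : ℤ) (hq : q + 1 = p) (hr : p + 1 = r) :
    (δ (-1) 0 z).v p p (add_zero p) = z.v p q (by lia) ≫ L.d q p + K.d p r ≫ z.v r p (by lia) := by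
  simp [δ_v (-1) 0 (neg_add_cancel 1) z p p (add_zero p) q r (by lia) hr]

namespace Cochain

def IsNullHomotopyAbove (z : Cochain K L (-1)) (φ : K ⟶ L) (n : ℤ) : Prop :=
  ∀ p, n < p → (δ (-1) 0 z).v p p (add_zero p) = φ.f p

lemma isNullHomotopyAbove_zero (φ : K ⟶ L) (n : ℤ) [K.IsStrictlyLE n] :
    (0 : Cochain K L (-1)).IsNullHomotopyAbove φ n :=
  fun p hp => (K.isZero_of_isStrictlyLE n p hp).eq_of_src _ _

namespace IsNullHomotopyAbove

variable {z : Cochain K L (-1)} {φ : K ⟶ L} {n : ℤ}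

lemma nonempty_homotopy_zero (hz : z.IsNullHomotopyAbove φ n) {a : ℤ} [K.IsStrictlyGE a]
    (hn : n < a) : Nonempty (Homotopy φ 0) := by
  refine ⟨(equivHomotopy φ 0).symm ⟨z, ?_⟩⟩
  ext p
  rw [ofHom_zero, add_zero, ofHom_v]
  by_cases hp : n < p
  · exact (hz p hp).symm
  · exact (K.isZero_of_isStrictlyGE a p).eq_of_src _ _

lemma sub_comp_d_eq_zero (hz : z.IsNullHomotopyAbove φ n) :
    (φ.f n - K.d n (n + 1) ≫ z.v (n + 1) n (by lia)) ≫ L.d n (n + 1) = 0 := by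
  have h := hz (n + 1) (by lia)
  rw [δ_neg_one_v z (n + 1) n (n + 2) rfl (by lia)] at h
  rw [Preadditive.sub_comp, φ.comm, ← h, Preadditive.comp_add, K.d_comp_d_assoc, zero_comp,
    add_zero, Category.assoc, sub_self]

lemma smul_add_single {R : Type*} [Ring R] [Linear R C] (hz : z.IsNullHomotopyAbove φ n) (r : R)
    (c : K.X n ⟶ L.X (n - 1))
    (hc : c ≫ L.d (n - 1) n = r • (φ.f n - K.d n (n + 1) ≫ z.v (n + 1) n (by lia))) :
    -- `r • z` with its component in degree `n` replaced by `c`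
    (r • z + single (c - r • z.v n (n - 1) (by lia)) (-1)).IsNullHomotopyAbove (r • φ) (n - 1) := by
  intro p hp
  rw [δ_add, δ_smul, add_v, smul_v, HomologicalComplex.smul_f_apply,
    δ_neg_one_v (single _ _) p (p - 1) (p + 1) (by lia) rfl,
    single_v_eq_zero _ _ (p + 1) p _ (by lia)]
  obtain rfl | hp := (by lia : p = n ∨ n < p)
  · rw [single_v, δ_neg_one_v z p (p - 1) (p + 1) (by lia) rfl, Preadditive.sub_comp, hc,
      Linear.smul_comp]
    simp only [comp_zero, add_zero, smul_sub, smul_add]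
    abel
  · rw [single_v_eq_zero _ _ _ _ _ (by lia), hz p hp]
    simp

end IsNullHomotopyAbove

end Cochain

end CochainComplex.HomComplex

namespace CochainComplex

open HomComplex

lemma exists_comp_d_eq_pow_smul {R : Type u} [CommRing R] {Y : CochainComplex (ModuleCat.{v} R) ℤ}
    {x : R} (j : ℤ) (hY : ∀ α : Y.homology j, ∃ n : ℕ, x ^ n • α = 0)
    {M : ModuleCat.{v} R} [Module.Finite R M] [Module.Projective R M]
    (φ : M ⟶ Y.X j) (hφ : φ ≫ Y.d j (j + 1) = 0) :
    ∃ (n : ℕ) (c : M ⟶ Y.X (j - 1)), c ≫ Y.d (j - 1) j = x ^ n • φ :=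
  (Y.sc' (j - 1) j (j + 1)).exists_comp_f_eq_pow_smul
    (ModuleCat.exists_pow_smul_eq_zero_of_iso (Y.homologyIsoSc' _ j _ (by simp) (by simp)) hY) φ hφ

section

variable {R : Type u} [CommRing R] {P Y : CochainComplex (ModuleCat.{v} R) ℤ}
  [∀ n, Module.Finite R (P.X n)] [∀ n, Module.Projective R (P.X n)] {x : R}
  (hY : ∀ (i : ℤ) (α : Y.homology i), ∃ n : ℕ, x ^ n • α = 0) (g : P ⟶ Y)
include hY

lemma exists_pow_smul_isNullHomotopyAbove (b : ℤ) [P.IsStrictlyLE b] (m : ℕ) :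
    ∃ (k : ℕ) (z : Cochain P Y (-1)), z.IsNullHomotopyAbove (x ^ k • g) (b - m) := by
  induction m with
  | zero => exact ⟨0, 0, by simpa using Cochain.isNullHomotopyAbove_zero g b⟩
  | succ m ih =>
    obtain ⟨k, z, hz⟩ := ih
    obtain ⟨k', c, hc⟩ := exists_comp_d_eq_pow_smul _ (hY _) _ hz.sub_comp_d_eq_zero
    have hz' := hz.smul_add_single (x ^ k') c hc
    rw [smul_smul, ← pow_add] at hz'
    exact ⟨_, _, by simpa [sub_sub] using hz'⟩

theorem exists_pow_smul_homotopy_zero (a b : ℤ) [P.IsStrictlyGE a] [P.IsStrictlyLE b] :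
    ∃ k : ℕ, Nonempty (Homotopy (x ^ k • g) 0) := by
  obtain ⟨k, z, hz⟩ := exists_pow_smul_isNullHomotopyAbove hY g b (b - a + 1).toNat
  exact ⟨k, hz.nonempty_homotopy_zero (a := a) (by lia)⟩

end

end CochainComplex

lemma DerivedCategory.Q_map_surjective_of_isKProjective {C : Type*} [Category C] [Abelian C]
    [HasDerivedCategory C] (K L : CochainComplex C ℤ) [K.IsKProjective] :
    Function.Surjective (Q.map : (K ⟶ L) → (Q.obj K ⟶ Q.obj L)) := fun f => by
  obtain ⟨φ, hφ⟩ := (CochainComplex.IsKProjective.Qh_map_bijective K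
    ((HomotopyCategory.quotient _ _).obj L)).2 f
  obtain ⟨g, rfl⟩ := (HomotopyCategory.quotient _ _).map_surjective φ
  exact ⟨g, hφ⟩

lemma DerivedCategory.smul_Q_map {R : Type u} [CommRing R]
    [HasDerivedCategory.{w} (ModuleCat.{u} R)] {M N : CochainComplex (ModuleCat.{u} R) ℤ}
    (r : R) (g : M ⟶ N) : r • Q.map g = Q.map (r • g) := by
  change Q.map g ≫ Q.map (r • 𝟙 N) = _
  rw [← Functor.map_comp, Linear.comp_smul, Category.comp_id]

variable (R : Type u) [CommRing R] [IsNoetherianRing R]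

variable (R : Type u) [CommRing R] [IsNoetherianRing R]
  [HasDerivedCategory.{w} (ModuleCat.{u} R)]

/-- If `X` is perfect (represented by a bounded complex `P` of finitely generated
projective modules), `x ∈ R`, and every homology class of `Y` is annihilated by some
power of `x`, then every morphism `f : X ⟶ Y` in `D(R)` is annihilated by some
power of `x`. -/
theorem pow_smul_hom_eq_zero
    (P Y : CochainComplex (ModuleCat.{u} R) ℤ)
    (hbd : ∃ a b : ℤ, ∀ n : ℤ, (n < a ∨ b < n) → IsZero (P.X n))
    (hfg : ∀ n : ℤ, Module.Finite R (P.X n))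
    (hproj : ∀ n : ℤ, Module.Projective R (P.X n))
    (x : R) (f : DerivedCategory.Q.obj P ⟶ DerivedCategory.Q.obj Y)
    (hY : ∀ (i : ℤ) (α : Y.homology i), ∃ n : ℕ, x ^ n • α = 0) :
    ∃ l : ℕ, x ^ l • f = 0 := by
  obtain ⟨a, b, hP⟩ := hbd
  have : P.IsStrictlyGE a := (P.isStrictlyGE_iff a).2 fun i hi => hP i (.inl hi)
  have : P.IsStrictlyLE b := (P.isStrictlyLE_iff b).2 fun i hi => hP i (.inr hi)
  have := hfg
  have := hproj
  have : P.IsKProjective := CochainComplex.isKProjective_of_projective P b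
  obtain ⟨g, rfl⟩ := DerivedCategory.Q_map_surjective_of_isKProjective P Y f
  obtain ⟨k, ⟨h⟩⟩ := CochainComplex.exists_pow_smul_homotopy_zero hY g a b
  exact ⟨k, by rw [DerivedCategory.smul_Q_map, DerivedCategory.Q_map_eq_of_homotopy _ h,
    Functor.map_zero]⟩
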